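/- For a moving linear finite element basis, if φ_j(x,t) are the piecewise linear basis functions on a mesh whose vertices move with piecewise linear velocity field Ẋ(x,t) = Σ_k ẋ_k(t)φ_k(x,t), then on each element ∂φ_j/∂t = −∇φ_j · Ẋ (for a single simplex, the hat function associated with one vertex of a nondegenerate simplex with linearly moving vertices satisfies this identity). -/

import Mathlib

open Real
open Matrix


lemma aux_prod_diff {ι : Type*} (u : Finset ι) (f : ι → ℝ → ℝ) (t : ℝ)
    (h : ∀ i ∈ u, DifferentiableAt ℝ (f i) t) :
    DifferentiableAt ℝ (fun s => ∏ i ∈ u, f i s) t := by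
  classical
  induction u using Finset.induction with
  | empty => simp
  | insert _ _ hni ih =>
    simp only [Finset.prod_insert hni]
    exact (h _ (Finset.mem_insert_self _ _)).mul
      (ih fun i hi => h i (Finset.mem_insert_of_mem hi))

lemma aux_det_diff {n : ℕ} (M : ℝ → Matrix (Fin n) (Fin n) ℝ) (t : ℝ)
    (h : ∀ i j, DifferentiableAt ℝ (fun s => M s i j) t) :
    DifferentiableAt ℝ (fun s => (M s).det) t := by
  simp only [Matrix.det_apply']
  exact DifferentiableAt.fun_sum fun σ _ =>
    (differentiableAt_const _).mul (aux_prod_diff _ _ _ fun i _ => h _ _)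



/-- For a nondegenerate simplex with vertices `X i t` moving smoothly in time, the
linear (hat) basis functions `φ k (·, t)` — affine functions satisfying
`φ k (X i t) t = δ_{ik}` — satisfy `∂φ_j/∂t = −∇φ_j · Ẋ` in the interior of the
simplex, where `Ẋ(x,t) = Σ_k φ_k(x,t) ẋ_k(t)` is the piecewise linear mesh
velocity field. -/
theorem moving_basis_time_derivative (d : ℕ) (hd : 1 ≤ d)
    (X : Fin (d + 1) → ℝ → EuclideanSpace ℝ (Fin d))
    (hX : ∀ k, Differentiable ℝ (X k))
    (hind : ∀ t, AffineIndependent ℝ fun i => X i t)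
    (φ : Fin (d + 1) → EuclideanSpace ℝ (Fin d) → ℝ → ℝ)
    (haff : ∀ k t, ∃ (L : EuclideanSpace ℝ (Fin d) →L[ℝ] ℝ) (c : ℝ),
      ∀ y, φ k y t = L y + c)
    (hinterp : ∀ k i t, φ k (X i t) t = if i = k then 1 else 0)
    (j : Fin (d + 1)) (t : ℝ) (x : EuclideanSpace ℝ (Fin d))
    (hx : x ∈ interior (convexHull ℝ (Set.range fun i => X i t))) :
    deriv (fun s => φ j x s) t
      = -(fderiv ℝ (fun y => φ j y t) x (∑ k, φ k x t • deriv (X k) t)) := by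
  classical
  have hspan : ∀ s, affineSpan ℝ (Set.range fun i => X i s) = ⊤ := by
    intro s
    rw [(hind s).affineSpan_eq_top_iff_card_eq_finrank_add_one]
    simp [finrank_euclideanSpace_fin]
  set B : ℝ → AffineBasis (Fin (d + 1)) ℝ (EuclideanSpace ℝ (Fin d)) :=
    fun s => ⟨fun i => X i s, hind s, hspan s⟩ with hB
  have hφcoord : ∀ k s y, φ k y s = (B s).coord k y := by
    intro k s y
    obtain ⟨L, c, hLc⟩ := haff k s
    set f : EuclideanSpace ℝ (Fin d) →ᵃ[ℝ] ℝ :=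
      { toFun := fun y => L y + c
        linear := (L : EuclideanSpace ℝ (Fin d) →ₗ[ℝ] ℝ)
        map_vadd' := by intro p v; simp [map_add]; ring } with hf
    have hsum := (B s).sum_coord_apply_eq_one y
    have key := Finset.univ.map_affineCombination (fun i => X i s)
      (fun i => (B s).coord i y) hsum f
    have hself : Finset.univ.affineCombination ℝ (fun i => X i s)
        (fun i => (B s).coord i y) = y := (B s).affineCombination_coord_eq_self y
    rw [hself] at key
    rw [Finset.univ.affineCombination_eq_linear_combination _ _ hsum] at key
    have : ∀ i, f (X i s) = if i = k then 1 else 0 := by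
      intro i
      have := hinterp k i s
      simp only [hf, AffineMap.coe_mk]
      rw [← hLc]; exact this
    calc φ k y s = f y := (hLc y).symm ▸ rfl
      _ = ∑ i, (B s).coord i y • ((f ∘ fun i => X i s) i) := key
      _ = ∑ i, (B s).coord i y • (if i = k then (1:ℝ) else 0) := by
          refine Finset.sum_congr rfl fun i _ => by rw [Function.comp_apply, this i]
      _ = (B s).coord k y := by simp [smul_ite]
  set A : ℝ → Matrix (Fin (d + 1)) (Fin (d + 1)) ℝ :=
    fun s m k => (Fin.cons (1 : ℝ) (fun i => X k s i) : Fin (d+1) → ℝ) m with hA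
  have hsum1 : ∀ s y, ∑ k, φ k y s = 1 := by
    intro s y
    simp only [hφcoord]
    exact (B s).sum_coord_apply_eq_one y
  have hrep : ∀ s y, ∑ k, φ k y s • X k s = y := by
    intro s y
    simp only [hφcoord]
    exact (B s).linear_combination_coord_eq_self y
  have hmul : ∀ s y, A s *ᵥ (fun k => φ k y s) = Fin.cons 1 (fun i => y i) := by
    intro s y
    funext m
    refine Fin.cases ?_ ?_ m
    · simp [hA, Matrix.mulVec, dotProduct, hsum1 s y]
    · intro i
      have hcomp := congrArg (fun v => (EuclideanSpace.proj i :
        EuclideanSpace ℝ (Fin d) →L[ℝ] ℝ) v) (hrep s y)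
      simp only [map_sum, _root_.map_smul, PiLp.proj_apply, smul_eq_mul] at hcomp
      simp [hA, Matrix.mulVec, dotProduct, mul_comm]
      simpa [mul_comm] using hcomp
  have hdet : ∀ s, IsUnit (A s).det := by
    intro s
    rw [isUnit_iff_ne_zero]
    intro hzero
    obtain ⟨v, hv0, hv⟩ := Matrix.exists_mulVec_eq_zero_iff.mpr hzero
    have h1 : ∑ k, v k = 0 := by
      have := congrFun hv 0
      simpa [hA, Matrix.mulVec, dotProduct] using this
    have h2 : ∑ k, v k • X k s = 0 := by
      refine PiLp.ext fun i => ?_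
      have h3 := congrFun hv i.succ
      simp only [hA, Matrix.mulVec, dotProduct, Fin.cons_succ, Pi.zero_apply] at h3
      have h4 : (EuclideanSpace.proj i : EuclideanSpace ℝ (Fin d) →L[ℝ] ℝ)
          (∑ k, v k • X k s) = 0 := by
        simp only [map_sum, _root_.map_smul, PiLp.proj_apply, smul_eq_mul]
        simpa [mul_comm] using h3
      exact (show ((EuclideanSpace.proj i : EuclideanSpace ℝ (Fin d) →L[ℝ] ℝ)
        (∑ k, v k • X k s) : ℝ) = (∑ k, v k • X k s) i from rfl) ▸ h4
    have := (affineIndependent_iff_of_fintype (k := ℝ) (fun i => X i s)).mp (hind s) v h1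
    rw [Finset.weightedVSub_eq_linear_combination _ h1] at this
    exact hv0 (funext (this h2))
  have hφA : ∀ k s y, φ k y s
      = ((A s)⁻¹ *ᵥ (Fin.cons 1 (fun i => y i) : Fin (d+1) → ℝ)) k := by
    intro k s y
    have h1 := hmul s y
    have h2 : (A s)⁻¹ *ᵥ (A s *ᵥ fun k => φ k y s)
        = (A s)⁻¹ *ᵥ (Fin.cons 1 (fun i => y i) : Fin (d+1) → ℝ) := by rw [h1]
    rw [Matrix.mulVec_mulVec, Matrix.nonsing_inv_mul _ (hdet s), Matrix.one_mulVec] at h2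
    exact congrFun h2 k
  have hAdiff : ∀ m k, Differentiable ℝ (fun s => A s m k) := by
    intro m k
    refine Fin.cases ?_ ?_ m
    · simp only [hA, Fin.cons_zero]
      exact differentiable_const _
    · intro i
      simp only [hA, Fin.cons_succ]
      exact (EuclideanSpace.proj i :
        EuclideanSpace ℝ (Fin d) →L[ℝ] ℝ).differentiable.comp (hX k)
  have hψdiff : ∀ k, DifferentiableAt ℝ (fun s => φ k x s) t := by
    intro k
    have hform : ∀ s, φ k x s
        = (∑ m, (A s).adjugate k m * (Fin.cons 1 (fun i => x i) : Fin (d+1) → ℝ) m)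
          / (A s).det := by
      intro s
      rw [hφA k s x, Matrix.inv_def, Matrix.smul_mulVec]
      simp [Matrix.mulVec, dotProduct, Ring.inverse_eq_inv, div_eq_mul_inv, mul_comm]
    simp only [hform]
    apply DifferentiableAt.div
    · apply DifferentiableAt.fun_sum
      intro m _
      refine DifferentiableAt.mul ?_ (differentiableAt_const _)
      simp only [Matrix.adjugate_apply]
      refine aux_det_diff _ t ?_
      intro a bb
      simp only [Matrix.updateRow_apply]
      by_cases hab : a = m
      · simp [hab]
      · simp only [hab, if_false]
        exact (hAdiff a bb).differentiableAt
    · exact aux_det_diff _ t fun a bb => (hAdiff a bb).differentiableAt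
    · exact isUnit_iff_ne_zero.mp (hdet t)
  set A' : Fin (d + 1) → Fin (d + 1) → ℝ :=
    fun m k => (Fin.cons (0 : ℝ) (fun i => deriv (X k) t i) : Fin (d+1) → ℝ) m with hA'
  have hAd : ∀ m k, HasDerivAt (fun s => A s m k) (A' m k) t := by
    intro m k
    refine Fin.cases ?_ ?_ m
    · simp only [hA, hA', Fin.cons_zero]
      exact hasDerivAt_const t 1
    · intro i
      simp only [hA, hA', Fin.cons_succ]
      have h1 : HasDerivAt (X k) (deriv (X k) t) t := ((hX k) t).hasDerivAt
      have h2 := (EuclideanSpace.proj i :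
        EuclideanSpace ℝ (Fin d) →L[ℝ] ℝ).hasFDerivAt.comp_hasDerivAt t h1
      exact h2
  set ψ : Fin (d + 1) → ℝ := fun k => φ k x t with hψ
  set w : Fin (d + 1) → ℝ := fun k => deriv (fun s => φ k x s) t with hw
  have heq : ∀ m, ∑ k, (A' m k * ψ k + A t m k * w k) = 0 := by
    intro m
    have hder : HasDerivAt (fun s => ∑ k, A s m k * φ k x s)
        (∑ k, (A' m k * ψ k + A t m k * w k)) t := by
      refine HasDerivAt.fun_sum fun k _ => ?_
      exact (hAd m k).mul ((hψdiff k).hasDerivAt)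
    have hconstf : (fun s => ∑ k, A s m k * φ k x s)
        = fun _ => (Fin.cons (1 : ℝ) (fun i => x i) : Fin (d+1) → ℝ) m := by
      funext s
      have := congrFun (hmul s x) m
      simpa [Matrix.mulVec, dotProduct] using this
    rw [hconstf] at hder
    exact hder.unique (hasDerivAt_const _ _)
  have hATw : A t *ᵥ w = fun m => -∑ k, A' m k * ψ k := by
    funext m
    have h0 := heq m
    rw [Finset.sum_add_distrib] at h0
    have h1 : ∑ k, A t m k * w k = -∑ k, A' m k * ψ k := by linarith
    simpa [Matrix.mulVec, dotProduct] using h1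
  have hwj : w = (A t)⁻¹ *ᵥ fun m => -∑ k, A' m k * ψ k := by
    have h2 : (A t)⁻¹ *ᵥ (A t *ᵥ w)
        = (A t)⁻¹ *ᵥ fun m => -∑ k, A' m k * ψ k := by rw [hATw]
    rwa [Matrix.mulVec_mulVec, Matrix.nonsing_inv_mul _ (hdet t), Matrix.one_mulVec] at h2
  obtain ⟨L, c, hLc⟩ := haff j t
  have hfder : fderiv ℝ (fun y => φ j y t) x = L := by
    have hfun : (fun y => φ j y t) = fun y => L y + c := funext hLc
    rw [hfun]
    exact (L.hasFDerivAt.add_const c).fderiv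
  have hL : ∀ y : EuclideanSpace ℝ (Fin d),
      L y = ((A t)⁻¹ *ᵥ (Fin.cons 0 (fun i => y i) : Fin (d+1) → ℝ)) j := by
    intro y
    have e1 := hφA j t y
    have e0 := hφA j t 0
    have hsub : L y = φ j y t - φ j (0 : EuclideanSpace ℝ (Fin d)) t := by
      rw [hLc y, hLc 0]; simp
    have hcons : (Fin.cons 1 (fun i => y i) : Fin (d+1) → ℝ)
        - (Fin.cons 1 (fun i => (0 : EuclideanSpace ℝ (Fin d)) i) : Fin (d+1) → ℝ)
        = (Fin.cons 0 (fun i => y i) : Fin (d+1) → ℝ) := by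
      funext m
      refine Fin.cases ?_ ?_ m
      · simp
      · intro i
        have : (0 : EuclideanSpace ℝ (Fin d)) i = 0 := rfl
        simp [this]
    rw [hsub, e1, e0]
    have := congrFun (Matrix.mulVec_sub (A t)⁻¹
      (Fin.cons 1 (fun i => y i) : Fin (d+1) → ℝ)
      (Fin.cons 1 (fun i => (0 : EuclideanSpace ℝ (Fin d)) i) : Fin (d+1) → ℝ)) j
    rw [hcons] at this
    rw [this]
    exact (Pi.sub_apply _ _ _).symm
  have hvi : ∀ i, (∑ k, ψ k • deriv (X k) t) i = ∑ k, ψ k * deriv (X k) t i := by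
    intro i
    have h6 : (EuclideanSpace.proj i : EuclideanSpace ℝ (Fin d) →L[ℝ] ℝ)
        (∑ k, ψ k • deriv (X k) t) = ∑ k, ψ k * deriv (X k) t i := by
      simp [map_sum, _root_.map_smul, PiLp.proj_apply, smul_eq_mul]
    exact h6
  have hu : (fun m => -∑ k, A' m k * ψ k)
      = -(Fin.cons 0 (fun i => (∑ k, ψ k • deriv (X k) t) i) : Fin (d+1) → ℝ) := by
    funext m
    refine Fin.cases ?_ ?_ m
    · simp [hA']
    · intro i
      simp only [Pi.neg_apply, Fin.cons_succ, hA']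
      rw [hvi i]
      congr 1
      exact Finset.sum_congr rfl fun k _ => mul_comm _ _
  have final : w j = -(L (∑ k, ψ k • deriv (X k) t)) := by
    rw [hL, hwj, hu, Matrix.mulVec_neg]
    rfl
  show deriv (fun s => φ j x s) t = -(fderiv ℝ (fun y => φ j y t) x (∑ k, φ k x t • deriv (X k) t))
  rw [hfder]
  exact final
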